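/- arXiv:1508.02247 — 2 statements merged into one kernel-verified Lean document; each statement's English description precedes it below -/
import Mathlib

section
/- Let Γ be a finitely generated group with a finite symmetric generating set S₁ and word length |·|₁. Let N be an integer strictly larger than the cardinality of S₁, and set S_N = {γ ∈ Γ : 1 ≤ |γ|₁ ≤ N}. Then every automorphism f of the marked Cayley graph (Γ, S_N) (i.e., every bijection f of Γ with f(γ)⁻¹ f(γs) ∈ {s, s⁻¹} for all γ ∈ Γ, s ∈ S_N) that is the identity on the ball of |·|₁-radius N−1 is the identity on all of Γ. -/
variable {Γ : Type*} [Group Γ]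

/-- Word length of `g` with respect to a generating set `S₁`. -/
noncomputable def wordLength (S₁ : Set Γ) (g : Γ) : ℕ :=
  sInf {n | ∃ l : List Γ, l.length = n ∧ (∀ x ∈ l, x ∈ S₁) ∧ l.prod = g}

namespace MarkedCayleyAux

lemma wl_le {S : Set Γ} {g : Γ} (l : List Γ) (h1 : ∀ x ∈ l, x ∈ S) (h2 : l.prod = g) :
    wordLength S g ≤ l.length :=
  Nat.sInf_le ⟨l, rfl, h1, h2⟩

lemma exists_rep {S : Set Γ} (hsymm : ∀ s ∈ S, s⁻¹ ∈ S) (hgen : Subgroup.closure S = ⊤)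
    (g : Γ) : ∃ l : List Γ, (∀ x ∈ l, x ∈ S) ∧ l.prod = g := by
  have hg : g ∈ Subgroup.closure S := by rw [hgen]; exact Subgroup.mem_top g
  induction hg using Subgroup.closure_induction with
  | mem x hx => exact ⟨[x], by simpa using hx, by simp⟩
  | one => exact ⟨[], by simp, by simp⟩
  | mul x y _ _ hx hy =>
    obtain ⟨l1, h1, e1⟩ := hx
    obtain ⟨l2, h2, e2⟩ := hy
    refine ⟨l1 ++ l2, ?_, by rw [List.prod_append, e1, e2]⟩
    intro z hz
    rcases List.mem_append.1 hz with h | h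
    · exact h1 z h
    · exact h2 z h
  | inv x _ hx =>
    obtain ⟨l, h, e⟩ := hx
    refine ⟨(l.map fun y => y⁻¹).reverse, ?_, ?_⟩
    · intro z hz
      simp only [List.mem_reverse, List.mem_map] at hz
      obtain ⟨y, hy, rfl⟩ := hz
      exact hsymm y (h y hy)
    · rw [← List.prod_inv_reverse, e]

lemma wl_spec {S : Set Γ} (hsymm : ∀ s ∈ S, s⁻¹ ∈ S) (hgen : Subgroup.closure S = ⊤)
    (g : Γ) : ∃ l : List Γ, l.length = wordLength S g ∧ (∀ x ∈ l, x ∈ S) ∧ l.prod = g := by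
  obtain ⟨l, h1, h2⟩ := exists_rep hsymm hgen g
  have hne : {n | ∃ l : List Γ, l.length = n ∧ (∀ x ∈ l, x ∈ S) ∧ l.prod = g}.Nonempty :=
    ⟨l.length, l, rfl, h1, h2⟩
  exact Nat.sInf_mem hne

lemma wl_zero {S : Set Γ} (hsymm : ∀ s ∈ S, s⁻¹ ∈ S) (hgen : Subgroup.closure S = ⊤)
    {g : Γ} (h : wordLength S g = 0) : g = 1 := by
  obtain ⟨l, h1, _, h3⟩ := wl_spec hsymm hgen g
  rw [h, List.length_eq_zero_iff] at h1
  rw [h1] at h3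
  simpa using h3.symm

lemma wl_mul {S : Set Γ} (hsymm : ∀ s ∈ S, s⁻¹ ∈ S) (hgen : Subgroup.closure S = ⊤)
    (g h : Γ) : wordLength S (g * h) ≤ wordLength S g + wordLength S h := by
  obtain ⟨l1, e1, m1, p1⟩ := wl_spec hsymm hgen g
  obtain ⟨l2, e2, m2, p2⟩ := wl_spec hsymm hgen h
  have := wl_le (l1 ++ l2)
    (fun x hx => by rcases List.mem_append.1 hx with h' | h'; exacts [m1 x h', m2 x h'])
    (by rw [List.prod_append, p1, p2])
  simpa [e1, e2] using this

lemma wl_inv {S : Set Γ} (hsymm : ∀ s ∈ S, s⁻¹ ∈ S) (hgen : Subgroup.closure S = ⊤)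
    (g : Γ) : wordLength S g⁻¹ ≤ wordLength S g := by
  obtain ⟨l, e, m, p⟩ := wl_spec hsymm hgen g
  have := wl_le ((l.map fun y => y⁻¹).reverse) (fun z hz => by
    simp only [List.mem_reverse, List.mem_map] at hz
    obtain ⟨y, hy, rfl⟩ := hz
    exact hsymm y (m y hy)) (by rw [← List.prod_inv_reverse, p])
  simpa [e] using this

end MarkedCayleyAux

open MarkedCayleyAux

/-- Let `Γ` be generated by a finite symmetric set `S₁`, let `N > |S₁|`, and
let `S_N = {γ : 1 ≤ |γ|₁ ≤ N}`. Every automorphism `f` of the marked Cayley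
graph `(Γ, S_N)` (a bijection with `f(γ)⁻¹ f(γs) ∈ {s, s⁻¹}` for all `γ` and
`s ∈ S_N`) which is the identity on the ball of radius `N - 1` is the
identity. -/
theorem marked_cayley_rigidity
    (S₁ : Finset Γ) (hsymm : ∀ s ∈ S₁, s⁻¹ ∈ S₁)
    (hgen : Subgroup.closure (S₁ : Set Γ) = ⊤)
    (N : ℕ) (hN : S₁.card < N)
    (f : Equiv.Perm Γ)
    (hf : ∀ (γ s : Γ), 1 ≤ wordLength (S₁ : Set Γ) s →
      wordLength (S₁ : Set Γ) s ≤ N →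
      (f γ)⁻¹ * f (γ * s) ∈ ({s, s⁻¹} : Set Γ))
    (hball : ∀ γ : Γ, wordLength (S₁ : Set Γ) γ ≤ N - 1 → f γ = γ) :
    ∀ γ : Γ, f γ = γ := by
  classical
  set S : Set Γ := (S₁ : Set Γ) with hSdef
  have hsymm' : ∀ s ∈ S, s⁻¹ ∈ S := fun s hs => hsymm s hs
  have main : ∀ n (γ : Γ), wordLength S γ ≤ n → f γ = γ := by
    intro n
    induction n with
    | zero => intro γ h; exact hball γ (le_trans h (Nat.zero_le _))
    | succ n IH =>
      intro γ hγle
      rcases Nat.lt_or_ge (wordLength S γ) (n + 1) with h | h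
      · exact IH γ (by omega)
      have hγ : wordLength S γ = n + 1 := le_antisymm hγle h
      by_cases hnN : n + 1 ≤ N - 1
      · exact hball γ (by omega)
      have hNn : N ≤ n + 1 := by omega
      have hN1 : 1 ≤ N := by omega
      by_contra hne
      -- key consequence of the marked-graph condition
      have hT : ∀ t : Γ, 1 ≤ wordLength S t → wordLength S t ≤ N →
          wordLength S (γ * t⁻¹) ≤ n → f γ = γ * t⁻¹ * t⁻¹ := by
        intro t h1 h2 h3
        have hδ : f (γ * t⁻¹) = γ * t⁻¹ := IH _ h3
        have hm := hf (γ * t⁻¹) t h1 h2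
        rw [hδ, inv_mul_cancel_right] at hm
        simp only [Set.mem_insert_iff, Set.mem_singleton_iff] at hm
        rcases hm with hm | hm
        · exfalso
          apply hne
          have : f γ = γ * t⁻¹ * t := by
            calc f γ = (γ * t⁻¹) * ((γ * t⁻¹)⁻¹ * f γ) := by group
              _ = γ * t⁻¹ * t := by rw [hm]
          rwa [inv_mul_cancel_right] at this
        · calc f γ = (γ * t⁻¹) * ((γ * t⁻¹)⁻¹ * f γ) := by group
            _ = γ * t⁻¹ * t⁻¹ := by rw [hm]
      obtain ⟨l, hlen, hmem, hprod⟩ := wl_spec hsymm' hgen γ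
      rw [hγ] at hlen
      set T : ℕ → Γ := fun k => (l.drop (n + 1 - k)).prod with hTdef
      have hsplit : ∀ k, (l.take (n + 1 - k)).prod * T k = γ := by
        intro k
        rw [hTdef]
        dsimp only
        rw [← List.prod_append, List.take_append_drop, hprod]
      have htake : ∀ k, wordLength S ((l.take (n + 1 - k)).prod) ≤ n + 1 - k := by
        intro k
        calc wordLength S ((l.take (n + 1 - k)).prod)
            ≤ (l.take (n + 1 - k)).length :=
              wl_le _ (fun x hx => hmem x (List.mem_of_mem_take hx)) rfl
          _ ≤ n + 1 - k := by rw [List.length_take, hlen]; omega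
      have hTwl : ∀ k, 1 ≤ k → k ≤ n + 1 → wordLength S (T k) = k := by
        intro k hk1 hk2
        have hle : wordLength S (T k) ≤ k := by
          calc wordLength S (T k)
              ≤ (l.drop (n + 1 - k)).length :=
                wl_le _ (fun x hx => hmem x (List.mem_of_mem_drop hx)) rfl
            _ = k := by rw [List.length_drop, hlen]; omega
        have hge : n + 1 ≤ (n + 1 - k) + wordLength S (T k) := by
          calc n + 1 = wordLength S γ := hγ.symm
            _ = wordLength S ((l.take (n + 1 - k)).prod * T k) := by rw [hsplit k]
            _ ≤ wordLength S ((l.take (n + 1 - k)).prod) + wordLength S (T k) :=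
                wl_mul hsymm' hgen _ _
            _ ≤ (n + 1 - k) + wordLength S (T k) := by
                have := htake k; omega
        omega
      have hγT : ∀ k, γ * (T k)⁻¹ = (l.take (n + 1 - k)).prod := by
        intro k
        rw [← hsplit k, mul_inv_cancel_right]
      have hTval : ∀ k, 1 ≤ k → k ≤ n + 1 → k ≤ N → f γ = γ * (T k)⁻¹ * (T k)⁻¹ := by
        intro k h1 h2 h3
        apply hT
        · rw [hTwl k h1 h2]; exact h1
        · rw [hTwl k h1 h2]; exact h3
        · rw [hγT k]
          exact le_trans (htake k) (by omega)
      set s : Γ := T 1 with hsdef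
      have hsval : f γ = γ * s⁻¹ * s⁻¹ := hTval 1 (by omega) (by omega) (by omega)
      have hs2 : s * s ≠ 1 := by
        intro hss
        apply hne
        rw [hsval]
        calc γ * s⁻¹ * s⁻¹ = γ * (s * s)⁻¹ := by group
          _ = γ := by rw [hss]; group
      have hkey : ∀ k (w : Γ), 1 ≤ k → k ≤ n + 1 → wordLength S w + k ≤ N →
          wordLength S w < k → w * T k * w = T k := by
        intro k w h1 h2 h3 h4
        have e2 := hTval k h1 h2 (by omega)
        have e1 : f γ = γ * (w * T k)⁻¹ * (w * T k)⁻¹ := by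
          apply hT
          · rw [Nat.one_le_iff_ne_zero]
            intro h0
            have hwt : w * T k = 1 := wl_zero hsymm' hgen h0
            have hTk : T k = w⁻¹ := eq_inv_of_mul_eq_one_right hwt
            have hwk : wordLength S w⁻¹ ≤ wordLength S w := wl_inv hsymm' hgen w
            rw [← hTk, hTwl k h1 h2] at hwk
            omega
          · calc wordLength S (w * T k)
                ≤ wordLength S w + wordLength S (T k) := wl_mul hsymm' hgen _ _
              _ = wordLength S w + k := by rw [hTwl k h1 h2]
              _ ≤ N := h3
          · have harr : γ * (w * T k)⁻¹ = (l.take (n + 1 - k)).prod * w⁻¹ := by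
              rw [mul_inv_rev, ← mul_assoc, hγT k]
            rw [harr]
            calc wordLength S ((l.take (n + 1 - k)).prod * w⁻¹)
                ≤ wordLength S ((l.take (n + 1 - k)).prod) + wordLength S w⁻¹ :=
                  wl_mul hsymm' hgen _ _
              _ ≤ n := by
                  have := htake k
                  have := wl_inv hsymm' hgen w
                  omega
        have h5 : (w * T k)⁻¹ * (w * T k)⁻¹ = (T k)⁻¹ * (T k)⁻¹ := by
          have h' := e1.symm.trans e2
          rw [mul_assoc, mul_assoc] at h'
          exact mul_left_cancel h'
        have h6 : (w * T k) * (w * T k) = T k * T k := by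
          have h5' := congrArg (fun x => x⁻¹) h5
          simpa [mul_inv_rev] using h5'
        have h7 : (w * T k * w) * T k = T k * T k := by
          rw [← h6]; group
        exact mul_right_cancel h7
      have hwl_of_mem : ∀ g ∈ S, wordLength S g ≤ 1 := by
        intro g hg
        have := wl_le (S := S) (g := g) [g]
          (fun x hx => by rw [List.mem_singleton] at hx; rwa [hx]) (by simp)
        simpa using this
      -- s is the last letter of l, hence a generator
      have hn_lt : n < l.length := by omega
      have hdropn : l.drop n = [l[n]] := by
        rw [List.drop_eq_getElem_cons hn_lt]
        congr 1
        exact List.drop_eq_nil_of_le (by omega)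
      have hs_eq : s = l[n] := by
        rw [hsdef, hTdef]
        dsimp only
        rw [show n + 1 - 1 = n from rfl, hdropn]
        simp
      have hsS : s ∈ S := by
        rw [hs_eq]
        exact hmem _ (List.getElem_mem hn_lt)
      have hsinvS : s⁻¹ ∈ S := hsymm' s hsS
      have hss' : s ≠ s⁻¹ := by
        intro h
        apply hs2
        nth_rewrite 2 [h]
        group
      rcases le_or_gt 5 N with hN5 | hN4
      · -- Case N ≥ 5 : all generators commute, contradiction
        have hn3 : 3 ≤ n + 1 := by omega
        have hg1 : ∀ g ∈ S, g * T 3 * g = T 3 := by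
          intro g hg
          have hwg := hwl_of_mem g hg
          exact hkey 3 g (by omega) hn3 (by omega) (by omega)
        have hcomm : ∀ g ∈ S, ∀ h ∈ S, g * h = h * g := by
          intro g hg h hh
          have hwg := hwl_of_mem g hg
          have hwh := hwl_of_mem h hh
          have hwgh := wl_mul hsymm' hgen g h
          have e3 : (g * h) * T 3 * (g * h) = T 3 :=
            hkey 3 (g * h) (by omega) hn3 (by omega) (by omega)
          have e1 := hg1 g hg
          have e2 := hg1 h hh
          have e4 : (g * h) * T 3 * (h * g) = T 3 := by
            calc (g * h) * T 3 * (h * g) = g * ((h * T 3 * h) * g) := by group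
              _ = g * (T 3 * g) := by rw [e2]
              _ = g * T 3 * g := by group
              _ = T 3 := e1
          have h' := e3.trans e4.symm
          exact mul_left_cancel h'
        have hvs : s * T 3 = T 3 * s := by
          have : Commute s (T 3) := by
            rw [hTdef]
            dsimp only
            apply Commute.list_prod_right
            intro x hx
            exact hcomm s hsS x (hmem x (List.mem_of_mem_drop hx))
          exact this
        apply hs2
        have hs3 := hg1 s hsS
        have : T 3 * (s * s) = T 3 * 1 := by
          rw [mul_one]
          calc T 3 * (s * s) = (T 3 * s) * s := by group
            _ = (s * T 3) * s := by rw [hvs]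
            _ = T 3 := hs3
        exact mul_left_cancel this
      rcases le_or_gt 3 N with hN3 | hN2
      · -- Case 3 ≤ N ≤ 4
        have hn2 : 2 ≤ n + 1 := by omega
        have hna : n - 1 < l.length := by omega
        set a : Γ := l[n - 1]'hna with hadef
        have haS : a ∈ S := hmem _ (List.getElem_mem hna)
        have hainvS : a⁻¹ ∈ S := hsymm' a haS
        have hT2 : T 2 = a * s := by
          rw [hTdef]
          dsimp only
          rw [show n + 1 - 2 = n - 1 by omega, List.drop_eq_getElem_cons hna, List.prod_cons]
          congr 1
          rw [hsdef, hTdef]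
          dsimp only
          rw [show n - 1 + 1 = n by omega, show n + 1 - 1 = n from rfl]
        have haa : ∀ w ∈ S, w * (a * s) * w = a * s := by
          intro w hw
          have hww := hwl_of_mem w hw
          have := hkey 2 w (by omega) hn2 (by omega) (by omega)
          rwa [hT2] at this
        have Ra := haa a haS
        have Rs' := haa s⁻¹ hsinvS
        have Ra' := haa a⁻¹ hainvS
        have hasa : a * s * a = s := by
          have h' : a * ((a * s) * a) = a * s := by
            calc a * ((a * s) * a) = a * (a * s) * a := by group
              _ = a * s := Ra
          have := mul_left_cancel h'
          calc a * s * a = (a * s) * a := by group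
            _ = s := this
        have h1 : s⁻¹ * a = a * s := by
          calc s⁻¹ * a = s⁻¹ * (a * s) * s⁻¹ := by group
            _ = a * s := Rs'
        have h2 : s * a⁻¹ = a * s := by
          calc s * a⁻¹ = a⁻¹ * (a * s) * a⁻¹ := by group
            _ = a * s := Ra'
        have haas : a * a = s * s := by
          have h3 : s⁻¹ * a = s * a⁻¹ := h1.trans h2.symm
          calc a * a = s * (s⁻¹ * a) * a := by group
            _ = s * (s * a⁻¹) * a := by rw [h3]
            _ = s * s := by group
        have has : a ≠ s := by
          intro h
          apply hs2
          rw [h] at hasa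
          have h' : (s * s) * s = 1 * s := by rw [one_mul]; exact hasa
          exact mul_right_cancel h'
        have has' : a ≠ s⁻¹ := by
          intro h
          rw [h] at hasa
          have : s⁻¹ = s := by simpa using hasa
          exact hss' this.symm
        have haa' : a ≠ a⁻¹ := by
          intro h
          apply hs2
          rw [← haas]
          nth_rewrite 1 [h]
          group
        have hsa2 : s ≠ a⁻¹ := by
          intro h
          exact has' (by rw [h, inv_inv])
        have hsub : ({s, s⁻¹, a, a⁻¹} : Finset Γ) ⊆ S₁ := by
          intro x hx
          simp only [Finset.mem_insert, Finset.mem_singleton] at hx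
          rcases hx with rfl | rfl | rfl | rfl
          · exact hsS
          · exact hsinvS
          · exact haS
          · exact hainvS
        have hc : ({s, s⁻¹, a, a⁻¹} : Finset Γ).card = 4 := by
          rw [Finset.card_insert_of_notMem (by simp [hss', has.symm, hsa2]),
            Finset.card_insert_of_notMem (by
              simp only [Finset.mem_insert, Finset.mem_singleton]
              push_neg
              constructor
              · intro h; exact has' h.symm
              · intro h; exact has (by rw [← inv_inv a, ← h, inv_inv])
              ),
            Finset.card_insert_of_notMem (by simp [haa']),
            Finset.card_singleton]
        have := Finset.card_le_card hsub
        omega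
      · -- Case N ≤ 2
        have hsub : ({s, s⁻¹} : Finset Γ) ⊆ S₁ := by
          intro x hx
          simp only [Finset.mem_insert, Finset.mem_singleton] at hx
          rcases hx with rfl | rfl
          · exact hsS
          · exact hsinvS
        have hc : ({s, s⁻¹} : Finset Γ).card = 2 := by
          rw [Finset.card_insert_of_notMem (by simp [hss']), Finset.card_singleton]
        have := Finset.card_le_card hsub
        omega
  intro γ
  exact main (wordLength S γ) γ le_rfl
end

section
/- Let Y be a connected graph with vertex set partitioned into subgraphs Y_i (i ∈ I) each isomorphic to a fixed graph with maximal degree M_Y, inside an ambient graph X of minimal degree m_X, and let q : Ỹ → Y be a 2-covering used to build the graph X̃ with inner, outer and vertical edges as in the pasting construction. Assume every edge of X belongs to strictly fewer than m_X − M_Y − 1 triangles. Then every isometry f of X̃ sends vertical edges to vertical edges, and consequently induces an isometry g of X such that the projection X̃ → X intertwines f and g. -/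
/-!
Let `π : X̃ → X` send `(ỹ, i)` to `(i, q ỹ)`; the vertical edges are exactly the edges inside a
fibre of `π`, and each fibre has two points. The ends of a vertical edge over `v` have as common
neighbours the whole fibres over the at least `m_X - M_Y` neighbours of `v` in other parts, so at
least `2 (m_X - M_Y)` of them, while the ends of any edge of `X̃` have at most `2 t + 2` common
neighbours, `t` the number of triangles on its image in `X`. The triangle bound separates the two
ranges, so an isometry preserves vertical edges, hence the fibres of `π`, and so descends to a
bijection of `X`; it is an isometry because every edge of `X` lifts to an edge of `X̃`.
-/

variable {VY VYt I : Type*}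

/-- A covering map of simple graphs. -/
def IsGraphCovering (G : SimpleGraph VYt) (G' : SimpleGraph VY) (f : VYt → VY) : Prop :=
  (∀ a b, G.Adj a b → G'.Adj (f a) (f b)) ∧
    ∀ v, Set.BijOn f (G.neighborSet v) (G'.neighborSet (f v))

/-- The pasted graph `X̃` obtained from a partition `X = ⊔_{i ∈ I} Y_i`
(encoded as `X` on the vertex set `I × VY`, each `{i} × VY` inducing `Y`) and
a 2-covering `q : Ỹ → Y`: its vertices are `Ỹ × I`, with inner edges (from
`Ỹ`), outer edges (from edges of `X` between distinct parts) and vertical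
edges (between the two points of a fiber of `q`). -/
def pastedGraph (Yt : SimpleGraph VYt) (X : SimpleGraph (I × VY))
    (q : VYt → VY) : SimpleGraph (VYt × I) where
  Adj a b :=
    (a.2 = b.2 ∧ (Yt.Adj a.1 b.1 ∨ (a.1 ≠ b.1 ∧ q a.1 = q b.1))) ∨
      (a.2 ≠ b.2 ∧ X.Adj (a.2, q a.1) (b.2, q b.1))
  symm := by
    constructor
    rintro a b (⟨h1, h2 | ⟨h2, h3⟩⟩ | ⟨h1, h2⟩)
    · exact Or.inl ⟨h1.symm, Or.inl h2.symm⟩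
    · exact Or.inl ⟨h1.symm, Or.inr ⟨h2.symm, h3.symm⟩⟩
    · exact Or.inr ⟨h1.symm, h2.symm⟩
  loopless := by
    constructor
    rintro a (⟨-, h | ⟨h, -⟩⟩ | ⟨h, -⟩)
    · exact Yt.loopless.irrefl _ h
    · exact h rfl
    · exact h rfl

/-- A vertical edge of the pasted graph: same index, distinct vertices in the
same fiber of `q`. -/
def VerticalAdj (q : VYt → VY) (a b : VYt × I) : Prop :=
  a.2 = b.2 ∧ a.1 ≠ b.1 ∧ q a.1 = q b.1

open Function SimpleGraph

section
variable {α β : Type*}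

theorem Set.ncard_preimage_eq_mul {f : α → β} {k : ℕ} (hk : k ≠ 0)
    (hf : ∀ b, (f ⁻¹' {b}).ncard = k) {s : Set β} (hs : s.Finite) :
    (f ⁻¹' s).ncard = k * s.ncard := by
  have hfin : ∀ t : Set β, t.Finite → (f ⁻¹' t).Finite := fun t ht =>
    ht.preimage' fun b _ => Set.finite_of_ncard_ne_zero (by rw [hf b]; exact hk)
  induction s, hs using Set.Finite.induction_on with
  | empty => simp
  | @insert b s hb hs ih =>
    rw [Set.insert_eq, Set.preimage_union,
      Set.ncard_union_eq ((Set.disjoint_singleton_left.2 hb).preimage f)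
        (hfin _ (Set.finite_singleton b)) (hfin s hs),
      ih, hf, ← Set.insert_eq, Set.ncard_insert_of_notMem hb hs]
    ring

noncomputable def Equiv.descend {π : α → β} (hπ : Surjective π) (e : α ≃ α)
    (he : ∀ a b, π a = π b ↔ π (e a) = π (e b)) : β ≃ β :=
  (Setoid.quotientKerEquivOfSurjective π hπ).symm.trans
    ((Quotient.congr e he).trans (Setoid.quotientKerEquivOfSurjective π hπ))

theorem Equiv.descend_apply {π : α → β} (hπ : Surjective π) (e : α ≃ α)
    (he : ∀ a b, π a = π b ↔ π (e a) = π (e b)) (a : α) :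
    Equiv.descend hπ e he (π a) = π (e a) := by
  have hmk : (Setoid.quotientKerEquivOfSurjective π hπ).symm (π a) = Quotient.mk _ a :=
    (Equiv.symm_apply_eq _).2 rfl
  rw [Equiv.descend, Equiv.trans_apply, Equiv.trans_apply, hmk]
  rfl

end

theorem SimpleGraph.Iso.ncard_commonNeighbors {V W : Type*} {G : SimpleGraph V}
    {G' : SimpleGraph W} (f : G ≃g G') (a b : V) :
    (G'.commonNeighbors (f a) (f b)).ncard = (G.commonNeighbors a b).ncard := by
  rw [commonNeighbors, commonNeighbors, ← f.image_neighborSet, ← f.image_neighborSet,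
    ← Set.image_inter f.injective, Set.ncard_image_of_injective _ f.injective]

section PastedGraph

variable {Y : SimpleGraph VY} {Yt : SimpleGraph VYt} {X : SimpleGraph (I × VY)} {q : VYt → VY}
  {a b : VYt × I}

def pastedProj (q : VYt → VY) (a : VYt × I) : I × VY := (a.2, q a.1)

theorem pastedProj_eq_iff : pastedProj q a = pastedProj q b ↔ a = b ∨ VerticalAdj q a b := by
  obtain ⟨a, i⟩ := a
  obtain ⟨b, j⟩ := b
  simp only [pastedProj, VerticalAdj, Prod.mk.injEq]
  tauto

theorem VerticalAdj.pastedProj_eq (h : VerticalAdj q a b) : pastedProj q a = pastedProj q b :=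
  pastedProj_eq_iff.2 (Or.inr h)

theorem VerticalAdj.adj (h : VerticalAdj q a b) : (pastedGraph Yt X q).Adj a b :=
  Or.inl ⟨h.1, Or.inr h.2⟩

theorem pastedProj_surjective (hq : Surjective q) : Surjective (pastedProj (I := I) q) := by
  rintro ⟨i, y⟩
  obtain ⟨z, rfl⟩ := hq y
  exact ⟨(z, i), rfl⟩

theorem ncard_pastedProj_fiber (h2 : ∀ y, {z | q z = y}.ncard = 2) (w : I × VY) :
    (pastedProj q ⁻¹' {w}).ncard = 2 := by
  have hfiber : pastedProj q ⁻¹' {w} = (·, w.1) '' {z | q z = w.2} := by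
    ext ⟨z, j⟩
    simp [pastedProj, Prod.ext_iff, and_comm, eq_comm]
  rw [hfiber, Set.ncard_image_of_injective _ (Prod.mk_left_injective w.1), h2]

theorem finite_preimage_pastedProj (h2 : ∀ y, {z | q z = y}.ncard = 2) {s : Set (I × VY)}
    (hs : s.Finite) : (pastedProj q ⁻¹' s).Finite :=
  hs.preimage' fun w _ => Set.finite_of_ncard_ne_zero (by simp [ncard_pastedProj_fiber h2 w])

theorem ncard_preimage_pastedProj (h2 : ∀ y, {z | q z = y}.ncard = 2) {s : Set (I × VY)}
    (hs : s.Finite) : (pastedProj q ⁻¹' s).ncard = 2 * s.ncard :=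
  Set.ncard_preimage_eq_mul two_ne_zero (ncard_pastedProj_fiber h2) hs

theorem adj_pastedProj_of_adj (hinduce : ∀ i y y', X.Adj (i, y) (i, y') ↔ Y.Adj y y')
    (hq : ∀ z z', Yt.Adj z z' → Y.Adj (q z) (q z'))
    (hab : (pastedGraph Yt X q).Adj a b) (hv : ¬VerticalAdj q a b) :
    X.Adj (pastedProj q a) (pastedProj q b) := by
  rcases hab with ⟨hi, hinner | hvert⟩ | ⟨-, houter⟩
  · rw [pastedProj, pastedProj, ← hi]
    exact (hinduce _ _ _).2 (hq _ _ hinner)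
  · exact absurd ⟨hi, hvert⟩ hv
  · exact houter

theorem pastedProj_eq_or_adj_of_adj (hinduce : ∀ i y y', X.Adj (i, y) (i, y') ↔ Y.Adj y y')
    (hq : ∀ z z', Yt.Adj z z' → Y.Adj (q z) (q z'))
    (hab : (pastedGraph Yt X q).Adj a b) :
    pastedProj q b = pastedProj q a ∨ X.Adj (pastedProj q a) (pastedProj q b) := by
  by_cases hv : VerticalAdj q a b
  · exact Or.inl hv.pastedProj_eq.symm
  · exact Or.inr (adj_pastedProj_of_adj hinduce hq hab hv)

theorem neighborSet_pastedGraph_finite (hinduce : ∀ i y y', X.Adj (i, y) (i, y') ↔ Y.Adj y y')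
    (hq : ∀ z z', Yt.Adj z z' → Y.Adj (q z) (q z')) (h2 : ∀ y, {z | q z = y}.ncard = 2)
    (hfin : ∀ v, (X.neighborSet v).Finite) (a : VYt × I) :
    ((pastedGraph Yt X q).neighborSet a).Finite :=
  (finite_preimage_pastedProj h2 ((hfin _).insert (pastedProj q a))).subset
    fun _ hb => pastedProj_eq_or_adj_of_adj hinduce hq hb

theorem exists_adj_pastedGraph_of_adj (hinduce : ∀ i y y', X.Adj (i, y) (i, y') ↔ Y.Adj y y')
    (hlift : ∀ z, Set.SurjOn q (Yt.neighborSet z) (Y.neighborSet (q z))) (hq : Surjective q)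
    {w w' : I × VY} (h : X.Adj w w') :
    ∃ a b, pastedProj q a = w ∧ pastedProj q b = w' ∧ (pastedGraph Yt X q).Adj a b := by
  obtain ⟨i, y⟩ := w
  obtain ⟨j, y'⟩ := w'
  obtain ⟨z, rfl⟩ := hq y
  by_cases hij : i = j
  · subst hij
    obtain ⟨z', hz', rfl⟩ := hlift z ((hinduce i _ _).1 h)
    exact ⟨(z, i), (z', i), rfl, rfl, Or.inl ⟨rfl, Or.inl hz'⟩⟩
  · obtain ⟨z', rfl⟩ := hq y'
    exact ⟨(z, i), (z', j), rfl, rfl, Or.inr ⟨hij, h⟩⟩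

def outerNeighborSet (X : SimpleGraph (I × VY)) (v : I × VY) : Set (I × VY) :=
  {w ∈ X.neighborSet v | w.1 ≠ v.1}

theorem ncard_neighborSet_le (hinduce : ∀ i y y', X.Adj (i, y) (i, y') ↔ Y.Adj y y')
    (i : I) (y : VY) :
    (X.neighborSet (i, y)).ncard ≤
      (outerNeighborSet X (i, y)).ncard + (Y.neighborSet y).ncard := by
  have hsplit :
      X.neighborSet (i, y) = outerNeighborSet X (i, y) ∪ Prod.mk i '' Y.neighborSet y := by
    refine Set.Subset.antisymm (fun ⟨j, y'⟩ h => ?_) (Set.union_subset (fun _ h => h.1) ?_)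
    · by_cases hij : j = i
      · subst hij
        exact Or.inr ⟨y', (hinduce _ _ _).1 h, rfl⟩
      · exact Or.inl ⟨h, hij⟩
    · rintro _ ⟨y', h, rfl⟩
      exact (hinduce _ _ _).2 h
  rw [hsplit, ← Set.ncard_image_of_injective (Y.neighborSet y) (Prod.mk_right_injective i)]
  exact Set.ncard_union_le _ _

theorem preimage_outerNeighborSet_subset_commonNeighbors (hab : VerticalAdj q a b) :
    pastedProj q ⁻¹' outerNeighborSet X (pastedProj q a) ⊆
      (pastedGraph Yt X q).commonNeighbors a b := by
  obtain ⟨hi, -, hq⟩ := hab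
  rintro c ⟨hadj, hne⟩
  refine ⟨Or.inr ⟨Ne.symm hne, hadj⟩, Or.inr ⟨?_, ?_⟩⟩
  · exact hi ▸ Ne.symm hne
  · show X.Adj (b.2, q b.1) (c.2, q c.1)
    rwa [← hi, ← hq]

theorem two_mul_ncard_outerNeighborSet_le
    (hinduce : ∀ i y y', X.Adj (i, y) (i, y') ↔ Y.Adj y y')
    (hq : ∀ z z', Yt.Adj z z' → Y.Adj (q z) (q z')) (h2 : ∀ y, {z | q z = y}.ncard = 2)
    (hfin : ∀ v, (X.neighborSet v).Finite) (hab : VerticalAdj q a b) :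
    2 * (outerNeighborSet X (pastedProj q a)).ncard ≤
      ((pastedGraph Yt X q).commonNeighbors a b).ncard := by
  rw [← ncard_preimage_pastedProj h2 ((hfin _).subset fun _ h => h.1)]
  exact Set.ncard_le_ncard (preimage_outerNeighborSet_subset_commonNeighbors hab)
    ((neighborSet_pastedGraph_finite hinduce hq h2 hfin a).subset Set.inter_subset_left)

theorem ncard_commonNeighbors_le (hinduce : ∀ i y y', X.Adj (i, y) (i, y') ↔ Y.Adj y y')
    (hq : ∀ z z', Yt.Adj z z' → Y.Adj (q z) (q z')) (h2 : ∀ y, {z | q z = y}.ncard = 2)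
    (hfin : ∀ v, (X.neighborSet v).Finite) (hab : (pastedGraph Yt X q).Adj a b) :
    ((pastedGraph Yt X q).commonNeighbors a b).ncard ≤
      2 * (X.commonNeighbors (pastedProj q a) (pastedProj q b)).ncard + 2 := by
  set T := X.commonNeighbors (pastedProj q a) (pastedProj q b)
  set R := insert (pastedProj q a) (insert (pastedProj q b) T)
  have hR : R.Finite := (((hfin _).subset Set.inter_subset_left).insert _).insert _
  have hsub : (pastedGraph Yt X q).commonNeighbors a b ⊆ pastedProj q ⁻¹' R \ {a, b} := by
    rintro c ⟨hac : (pastedGraph Yt X q).Adj a c, hbc : (pastedGraph Yt X q).Adj b c⟩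
    refine ⟨?_, ?_⟩
    · rcases pastedProj_eq_or_adj_of_adj hinduce hq hac with h | h
      · exact Or.inl h
      rcases pastedProj_eq_or_adj_of_adj hinduce hq hbc with h' | h'
      · exact Or.inr (Or.inl h')
      exact Or.inr (Or.inr ⟨h, h'⟩)
    · rintro (h | h)
      · exact hac.ne h.symm
      · exact hbc.ne h.symm
  have hpair : {a, b} ⊆ pastedProj q ⁻¹' R := by
    rintro c (rfl | rfl)
    · exact Or.inl rfl
    · exact Or.inr (Or.inl rfl)
  have hRcard : R.ncard ≤ T.ncard + 2 :=
    (Set.ncard_insert_le _ _).trans (Nat.add_le_add_right (Set.ncard_insert_le _ _) 1)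
  have hfinR := finite_preimage_pastedProj h2 hR
  have hsplit := Set.ncard_sdiff_add_ncard_of_subset hpair hfinR
  rw [ncard_preimage_pastedProj h2 hR, Set.ncard_pair hab.ne] at hsplit
  have hcommon := Set.ncard_le_ncard hsub hfinR.sdiff
  omega

theorem VerticalAdj.iso_apply (hinduce : ∀ i y y', X.Adj (i, y) (i, y') ↔ Y.Adj y y')
    (hq : ∀ z z', Yt.Adj z z' → Y.Adj (q z) (q z')) (h2 : ∀ y, {z | q z = y}.ncard = 2)
    {mX MY : ℕ} (hMY : ∀ y, (Y.neighborSet y).ncard ≤ MY)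
    (hmX : ∀ v, mX ≤ (X.neighborSet v).ncard)
    (htri : ∀ v w, X.Adj v w → (X.commonNeighbors v w).ncard + MY + 1 < mX)
    (f : pastedGraph Yt X q ≃g pastedGraph Yt X q) (hab : VerticalAdj q a b) :
    VerticalAdj q (f a) (f b) := by
  have hadj : (pastedGraph Yt X q).Adj (f a) (f b) := f.map_adj_iff.2 hab.adj
  by_contra hv
  have hX := adj_pastedProj_of_adj hinduce hq hadj hv
  have htriangles := htri _ _ hX
  -- `ncard` vanishes on infinite sets, so `0 < mX` makes `X` locally finite.
  have hfin : ∀ v, (X.neighborSet v).Finite := fun v =>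
    Set.finite_of_ncard_pos (by have := hmX v; omega)
  have hdeg : mX ≤ (outerNeighborSet X (pastedProj q a)).ncard + MY :=
    (hmX _).trans <| (ncard_neighborSet_le hinduce a.2 (q a.1)).trans
      (Nat.add_le_add_left (hMY _) _)
  have hlow := two_mul_ncard_outerNeighborSet_le hinduce hq h2 hfin hab
  have hup := ncard_commonNeighbors_le hinduce hq h2 hfin hadj
  rw [f.ncard_commonNeighbors] at hup
  omega

theorem pastedProj_apply_eq_of_preserves_verticalAdj {f : VYt × I → VYt × I}
    (hf : ∀ a b, VerticalAdj q a b → VerticalAdj q (f a) (f b))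
    (hab : pastedProj q a = pastedProj q b) : pastedProj q (f a) = pastedProj q (f b) := by
  rcases pastedProj_eq_iff.1 hab with rfl | h
  · rfl
  · exact (hf a b h).pastedProj_eq

theorem adj_pastedProj_apply (hinduce : ∀ i y y', X.Adj (i, y) (i, y') ↔ Y.Adj y y')
    (hcov : IsGraphCovering Yt Y q) (hq : Surjective q)
    (f : pastedGraph Yt X q ≃g pastedGraph Yt X q)
    (hf : ∀ a b, pastedProj q a = pastedProj q b ↔ pastedProj q (f a) = pastedProj q (f b))
    (h : X.Adj (pastedProj q a) (pastedProj q b)) :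
    X.Adj (pastedProj q (f a)) (pastedProj q (f b)) := by
  obtain ⟨a', b', ha, hb, hadj⟩ :=
    exists_adj_pastedGraph_of_adj hinduce (fun z => (hcov.2 z).surjOn) hq h
  have hne : pastedProj q (f a') ≠ pastedProj q (f b') := by
    rw [Ne, ← hf, ha, hb]
    exact h.ne
  rw [← (hf a' a).1 ha, ← (hf b' b).1 hb]
  exact adj_pastedProj_of_adj hinduce hcov.1 (f.map_adj_iff.2 hadj)
    fun hv => hne hv.pastedProj_eq

end PastedGraph

theorem pastedGraph_isometry_descends_general
    (Y : SimpleGraph VY) (Yt : SimpleGraph VYt) (X : SimpleGraph (I × VY))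
    (q : VYt → VY)
    (hcov : IsGraphCovering Yt Y q)
    (h2to1 : ∀ y : VY, {z : VYt | q z = y}.ncard = 2)
    (hinduce : ∀ (i : I) (y y' : VY), X.Adj (i, y) (i, y') ↔ Y.Adj y y')
    (mX MY : ℕ)
    (hMY : ∀ y : VY, (Y.neighborSet y).ncard ≤ MY)
    (hmX : ∀ v : I × VY, mX ≤ (X.neighborSet v).ncard)
    (htri : ∀ a b : I × VY, X.Adj a b →
      {c : I × VY | X.Adj a c ∧ X.Adj b c}.ncard + MY + 1 < mX) :
    ∀ f : pastedGraph Yt X q ≃g pastedGraph Yt X q,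
      (∀ a b : VYt × I, VerticalAdj q a b → VerticalAdj q (f a) (f b)) ∧
      ∃ g : X ≃g X, ∀ a : VYt × I,
        g (a.2, q a.1) = ((f a).2, q (f a).1) := by
  have hvert (e : pastedGraph Yt X q ≃g pastedGraph Yt X q) (a b : VYt × I) :
      VerticalAdj q a b → VerticalAdj q (e a) (e b) :=
    VerticalAdj.iso_apply hinduce hcov.1 h2to1 hMY hmX htri e
  have hfiber (e : pastedGraph Yt X q ≃g pastedGraph Yt X q) (a b : VYt × I) :
      pastedProj q a = pastedProj q b ↔ pastedProj q (e a) = pastedProj q (e b) :=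
    ⟨pastedProj_apply_eq_of_preserves_verticalAdj (hvert e), fun h => by
      simpa using pastedProj_apply_eq_of_preserves_verticalAdj (hvert e.symm) h⟩
  have hq : Surjective q := fun y =>
    Set.nonempty_of_ncard_ne_zero (s := {z | q z = y}) (by rw [h2to1]; exact two_ne_zero)
  have hπ := pastedProj_surjective (I := I) hq
  intro f
  refine ⟨hvert f, ⟨Equiv.descend hπ f.toEquiv (hfiber f), fun {w w'} => ?_⟩,
    Equiv.descend_apply hπ f.toEquiv (hfiber f)⟩
  obtain ⟨a, rfl⟩ := hπ w
  obtain ⟨b, rfl⟩ := hπ w'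
  simp only [Equiv.descend_apply]
  refine ⟨fun h => ?_, adj_pastedProj_apply hinduce hcov hq f (hfiber f)⟩
  simpa using adj_pastedProj_apply hinduce hcov hq f.symm (hfiber f.symm) h

/-- In the pasting construction, if every edge of `X` lies in strictly fewer
than `m_X - M_Y - 1` triangles (`m_X` the minimal degree of `X`, `M_Y` the
maximal degree of `Y`), then every isometry `f` of the pasted graph `X̃`
sends vertical edges to vertical edges and induces an isometry `g` of `X`
intertwined with `f` by the projection `X̃ → X`. -/
theorem pastedGraph_isometry_descends
    (Y : SimpleGraph VY) (Yt : SimpleGraph VYt) (X : SimpleGraph (I × VY))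
    (q : VYt → VY) (hYconn : Y.Connected)
    (hcov : IsGraphCovering Yt Y q)
    (h2to1 : ∀ y : VY, {z : VYt | q z = y}.ncard = 2)
    (hinduce : ∀ (i : I) (y y' : VY), X.Adj (i, y) (i, y') ↔ Y.Adj y y')
    (mX MY : ℕ)
    (hMY : ∀ y : VY, (Y.neighborSet y).ncard ≤ MY)
    (hmX : ∀ v : I × VY, mX ≤ (X.neighborSet v).ncard)
    (htri : ∀ a b : I × VY, X.Adj a b →
      {c : I × VY | X.Adj a c ∧ X.Adj b c}.ncard + MY + 1 < mX) :
    ∀ f : pastedGraph Yt X q ≃g pastedGraph Yt X q,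
      (∀ a b : VYt × I, VerticalAdj q a b → VerticalAdj q (f a) (f b)) ∧
      ∃ g : X ≃g X, ∀ a : VYt × I,
        g (a.2, q a.1) = ((f a).2, q (f a).1) :=
  pastedGraph_isometry_descends_general Y Yt X q hcov h2to1 hinduce mX MY hMY hmX htri
end
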